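/- arXiv:2306.13300 — 3 statements merged into one kernel-verified Lean document; each statement's English description precedes it below -/
import Mathlib

section
/- For the honeybee-parasite system u' = r*u^2/(K+u^2) - d_h*u - ω*u*v/(1+u), v' = ω*u*v/(1+u) - d_m*v with r > 2*d_h*sqrt(K) and ω > d_m, let N* = (r + sqrt(r^2-4*d_h^2*K))/(2*d_h) and u* = d_m/(ω - d_m). Then the boundary equilibrium (N*, 0) is a hyperbolic saddle whenever N* > u*: the Jacobian at (N*,0) has one negative eigenvalue λ_2 = -d_h + 2*K*d_h^2/(r*N*) < 0 and one positive eigenvalue λ_1 = ω*N*/(1+N*) - d_m > 0. -/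
theorem boundary_equilibrium_saddle
    (r K d_h d_m ω : ℝ) (hK : 0 < K) (hdh : 0 < d_h) (hdm : 0 < d_m)
    (hr : 2 * d_h * Real.sqrt K < r) (hω : d_m < ω) :
    let Ns := (r + Real.sqrt (r ^ 2 - 4 * d_h ^ 2 * K)) / (2 * d_h)
    let us := d_m / (ω - d_m)
    us < Ns →
      (-d_h + 2 * K * d_h ^ 2 / (r * Ns) < 0 ∧ 0 < ω * Ns / (1 + Ns) - d_m) := by
  intro Ns us hus
  have hsK : 0 < Real.sqrt K := Real.sqrt_pos.mpr hK
  have hr0 : 0 < r := lt_trans (by positivity) hr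
  have hdisc : 0 < r ^ 2 - 4 * d_h ^ 2 * K := by
    have h1 : (2 * d_h * Real.sqrt K) ^ 2 < r ^ 2 := by
      apply pow_lt_pow_left₀ hr (by positivity)
      norm_num
    have h2 : (2 * d_h * Real.sqrt K) ^ 2 = 4 * d_h ^ 2 * K := by
      rw [mul_pow, mul_pow, Real.sq_sqrt hK.le]; ring
    linarith [h2 ▸ h1]
  have hD0 : 0 ≤ Real.sqrt (r ^ 2 - 4 * d_h ^ 2 * K) := Real.sqrt_nonneg _
  have hNs : 0 < Ns := by
    have : 0 < r + Real.sqrt (r ^ 2 - 4 * d_h ^ 2 * K) := by linarith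
    exact div_pos this (by positivity)
  constructor
  · have hrNs : 2 * K * d_h < r * Ns := by
      show 2 * K * d_h < r * ((r + Real.sqrt (r ^ 2 - 4 * d_h ^ 2 * K)) / (2 * d_h))
      rw [← mul_div_assoc, lt_div_iff₀ (by positivity)]
      nlinarith [mul_nonneg hr0.le hD0]
    have h2 : 2 * K * d_h ^ 2 / (r * Ns) < d_h := by
      rw [div_lt_iff₀ (by positivity)]
      nlinarith
    linarith
  · have hωd : 0 < ω - d_m := by linarith
    have hus' : d_m < Ns * (ω - d_m) := by
      rw [div_lt_iff₀ hωd] at hus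
      linarith
    have h1 : d_m * (1 + Ns) < ω * Ns := by nlinarith
    have : d_m < ω * Ns / (1 + Ns) := by
      rw [lt_div_iff₀ (by linarith)]
      linarith
    linarith
end

section
/- Let (u*, v*) be the interior equilibrium of the honeybee-parasite system with ω > d_m and v* > 0. The trace of the Jacobian at (u*, v*) equals -u**( d_h*(K+(u*)^2)^2 + r*((u*)^2 - K*(2u*+1)) ) / ( (1+u*)*(K+(u*)^2)^2 ). In particular, the trace is zero if and only if d_h*(K+(u*)^2)^2 = r*(K*(2u*+1) - (u*)^2), the trace is negative (so (u*,v*) is a sink) when K < K_1, and positive (so (u*,v*) is a source) when K_1 < K < r*u*/d_h - (u*)^2, where K_1 = ( -sqrt(r)*sqrt(r*(2u*+1)^2 - 8*d_h*(u*)^2*(u*+1)) + 2*r*u* + r - 2*d_h*(u*)^2 )/(2*d_h). -/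
set_option maxHeartbeats 1000000


theorem interior_jacobian_trace
    (r K d_h d_m ω : ℝ) (hr : 0 < r) (hK : 0 < K) (hdh : 0 < d_h)
    (hdm : 0 < d_m) (hω : d_m < ω)
    (us vs : ℝ) (hus : us = d_m / (ω - d_m))
    (hvsdef : vs = (r * us - d_h * (us ^ 2 + K)) * (1 + us) / (ω * (us ^ 2 + K)))
    (hvs : 0 < vs) :
    let T : ℝ := -d_h + 2 * K * r * us / (K + us ^ 2) ^ 2 - ω * vs / (1 + us) ^ 2
    let K1 : ℝ := (-Real.sqrt r * Real.sqrt (r * (2 * us + 1) ^ 2 - 8 * d_h * us ^ 2 * (us + 1))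
        + 2 * r * us + r - 2 * d_h * us ^ 2) / (2 * d_h)
    T = -(us * (d_h * (K + us ^ 2) ^ 2 + r * (us ^ 2 - K * (2 * us + 1))))
        / ((1 + us) * (K + us ^ 2) ^ 2) ∧
    (T = 0 ↔ d_h * (K + us ^ 2) ^ 2 = r * (K * (2 * us + 1) - us ^ 2)) ∧
    (K < K1 → T < 0) ∧
    (K1 < K → K < r * us / d_h - us ^ 2 → 0 < T) := by
  have hus0 : 0 < us := by
    rw [hus]; exact div_pos hdm (by linarith)
  intro T K1
  have hKu : (0:ℝ) < K + us ^ 2 := by positivity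
  have h1 : (K + us ^ 2) ≠ 0 := ne_of_gt hKu
  have h1u : (0:ℝ) < 1 + us := by linarith
  have h2 : (1 + us) ≠ 0 := ne_of_gt h1u
  have hω0 : (0:ℝ) < ω := by linarith
  have h3 : ω ≠ 0 := ne_of_gt hω0
  have hden : 0 < (1 + us) * (K + us ^ 2) ^ 2 := by positivity
  set g : ℝ := d_h * (K + us ^ 2) ^ 2 + r * (us ^ 2 - K * (2 * us + 1)) with hg
  -- abbreviations for the sqrt terms
  set A : ℝ := r * (2 * us + 1) ^ 2 - 8 * d_h * us ^ 2 * (us + 1) with hA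
  set S : ℝ := Real.sqrt r * Real.sqrt A with hS
  have hS0 : 0 ≤ S := mul_nonneg (Real.sqrt_nonneg _) (Real.sqrt_nonneg _)
  have hT : T = -(us * g) / ((1 + us) * (K + us ^ 2) ^ 2) := by
    show -d_h + 2 * K * r * us / (K + us ^ 2) ^ 2 - ω * vs / (1 + us) ^ 2 = _
    rw [hvsdef, hg]
    field_simp
    ring
  -- the key quadratic identity : 4 d_h g = t^2 - r A, where t = 2 d_h K + b
  have hquad : 4 * d_h * g
      = (2 * d_h * K + (2 * d_h * us ^ 2 - 2 * r * us - r)) ^ 2 - r * A := by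
    rw [hg, hA]; ring
  refine ⟨hT, ?_, ?_, ?_⟩
  · rw [hT]
    constructor
    · intro h
      rcases div_eq_zero_iff.mp h with h' | h'
      · have hg0 : g = 0 := by
          rcases mul_eq_zero.mp (neg_eq_zero.mp h') with h'' | h''
          · exact absurd h'' (ne_of_gt hus0)
          · exact h''
        rw [hg] at hg0; linarith
      · exact absurd h' (ne_of_gt hden)
    · intro h
      have hg0 : g = 0 := by rw [hg]; linarith
      rw [hg0]; simp
  · -- sink case : K < K1 → T < 0
    intro hK1
    unfold K1 at hK1
    rw [← hA] at hK1
    have ht : 2 * d_h * K + (2 * d_h * us ^ 2 - 2 * r * us - r) < -S := by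
      have h' := (lt_div_iff₀ (by positivity : (0:ℝ) < 2 * d_h)).mp hK1
      rw [hS]; linarith
    have hgpos : 0 < g := by
      rcases le_or_gt 0 A with hA0 | hA0
      · have hS2 : S ^ 2 = r * A := by
          rw [hS, mul_pow, Real.sq_sqrt hr.le, Real.sq_sqrt hA0]
        nlinarith [ht, hS0, hS2, hquad]
      · have hrA : r * A < 0 := mul_neg_of_pos_of_neg hr hA0
        nlinarith [sq_nonneg (2 * d_h * K + (2 * d_h * us ^ 2 - 2 * r * us - r)), hquad, hrA]
    rw [hT]
    apply div_neg_of_neg_of_pos _ hden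
    linarith [mul_pos hus0 hgpos]
  · -- source case : K1 < K, K < Kmax → 0 < T
    intro hK1 hKmax
    unfold K1 at hK1
    rw [← hA] at hK1
    have ht : -S < 2 * d_h * K + (2 * d_h * us ^ 2 - 2 * r * us - r) := by
      have h' := (div_lt_iff₀ (by positivity : (0:ℝ) < 2 * d_h)).mp hK1
      rw [hS]; linarith
    have hKm : (K + us ^ 2) * d_h < r * us :=
      (lt_div_iff₀ hdh).mp (by linarith : K + us ^ 2 < r * us / d_h)
    have htneg : 2 * d_h * K + (2 * d_h * us ^ 2 - 2 * r * us - r) < -r := by nlinarith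
    have hgneg : g < 0 := by
      rcases le_or_gt 0 A with hA0 | hA0
      · have hS2 : S ^ 2 = r * A := by
          rw [hS, mul_pow, Real.sq_sqrt hr.le, Real.sq_sqrt hA0]
        nlinarith [ht, htneg, hS0, hS2, hquad]
      · have : S = 0 := by
          rw [hS, Real.sqrt_eq_zero_of_nonpos hA0.le, mul_zero]
        rw [this] at ht
        linarith
    rw [hT]
    apply div_pos _ hden
    linarith [mul_neg_of_pos_of_neg hus0 hgneg]
end

section
/- Let f(u) = (r*u^2/(K+u^2) - d_h*u)/(ω*u/(1+u)) with positive parameters, and let λ̄ > 0 satisfy f'(λ̄) = 0 and v* := f(λ̄) > 0. Then λ̄^2 > K and K*(1 + 2λ̄) > λ̄^2, and consequently f''(λ̄) = 2r*(K^2 - 3K*λ̄*(λ̄+1) + λ̄^3)/(ω*(K+λ̄^2)^3) < 0. -/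
theorem prey_nullcline_concave_at_top
    (r K d_h ω : ℝ) (hr : 0 < r) (hK : 0 < K) (hdh : 0 < d_h) (hω : 0 < ω)
    (f : ℝ → ℝ)
    (hf : f = fun u => (r * u ^ 2 / (K + u ^ 2) - d_h * u) / (ω * u / (1 + u)))
    (lam : ℝ) (hlam : 0 < lam)
    (hcrit : deriv f lam = 0) (hpos : 0 < f lam) :
    K < lam ^ 2 ∧ lam ^ 2 < K * (1 + 2 * lam) ∧
    deriv (deriv f) lam
      = 2 * r * (K ^ 2 - 3 * K * lam * (lam + 1) + lam ^ 3) / (ω * (K + lam ^ 2) ^ 3) ∧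
    deriv (deriv f) lam < 0 := by
  set g : ℝ → ℝ := fun u => (r * (u + u ^ 2) / (K + u ^ 2) - d_h * (1 + u)) / ω with hgdef
  have hden : ∀ x : ℝ, (0:ℝ) < K + x ^ 2 := fun x => by positivity
  have hfg : ∀ u ∈ Set.Ioi (0:ℝ), f u = g u := by
    intro u hu
    have hu0 : (0:ℝ) < u := hu
    have h1u : (0:ℝ) < 1 + u := by linarith
    rw [hf, hgdef]
    have hd := (hden u).ne'
    field_simp
  have hmem : Set.Ioi (0:ℝ) ∈ nhds lam := isOpen_Ioi.mem_nhds hlam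
  have hev : f =ᶠ[nhds lam] g := Filter.eventuallyEq_of_mem hmem hfg
  -- derivative of g everywhere
  have hK2 : ∀ x : ℝ, HasDerivAt (fun u : ℝ => K + u ^ 2) (2 * x) x := by
    intro x
    simpa using (hasDerivAt_pow 2 x).const_add K
  have hg' : ∀ x : ℝ, HasDerivAt g
      ((r * (K + 2 * K * x - x ^ 2) / (K + x ^ 2) ^ 2 - d_h) / ω) x := by
    intro x
    have h1 : HasDerivAt (fun u : ℝ => r * (u + u ^ 2)) (r * (1 + 2 * x)) x := by
      have := ((hasDerivAt_id x).add (hasDerivAt_pow 2 x)).const_mul r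
      simpa using this
    have h3 := h1.fun_div (hK2 x) (hden x).ne'
    have h4 : HasDerivAt (fun u : ℝ => d_h * (1 + u)) d_h x := by
      simpa using ((hasDerivAt_id x).const_add (1:ℝ)).const_mul d_h
    have h5 := (h3.fun_sub h4).div_const ω
    refine h5.congr_deriv ?_
    have hd := (hden x).ne'
    field_simp
    ring
  have hdg : deriv g = fun x => (r * (K + 2 * K * x - x ^ 2) / (K + x ^ 2) ^ 2 - d_h) / ω :=
    funext fun x => (hg' x).deriv
  -- first derivative condition
  have hcrit' : r * (K + 2 * K * lam - lam ^ 2) = d_h * (K + lam ^ 2) ^ 2 := by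
    have h0 : deriv f lam = deriv g lam := hev.deriv_eq
    rw [hcrit, hdg] at h0
    have hd := (hden lam).ne'
    field_simp at h0
    linarith
  -- positivity condition
  have hpos' : d_h * (K + lam ^ 2) < r * lam := by
    have h0 : 0 < g lam := by rw [← hfg lam hlam]; exact hpos
    rw [hgdef] at h0
    simp only at h0
    have h1 : 0 < r * (lam + lam ^ 2) / (K + lam ^ 2) - d_h * (1 + lam) :=
      (div_pos_iff.mp h0).resolve_right (fun h => absurd h.2 (not_lt.mpr hω.le)) |>.1
    have h2 : d_h * (1 + lam) * (K + lam ^ 2) < r * (lam + lam ^ 2) := by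
      rw [sub_pos, lt_div_iff₀ (hden lam)] at h1
      linarith
    nlinarith [hden lam, hlam]
  -- K < lam^2
  have hA : K < lam ^ 2 := by
    nlinarith [hden lam, mul_pos hdh (hden lam), hlam, sq_nonneg (K + lam ^ 2),
      mul_pos hlam (hden lam)]
  -- lam^2 < K*(1+2lam)
  have hB : lam ^ 2 < K * (1 + 2 * lam) := by
    nlinarith [mul_pos hdh (mul_pos (hden lam) (hden lam)), hr]
  -- second derivative
  have hsnd : deriv (deriv f) lam
      = 2 * r * (K ^ 2 - 3 * K * lam * (lam + 1) + lam ^ 3) / (ω * (K + lam ^ 2) ^ 3) := by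
    have heq : deriv (deriv f) lam = deriv (deriv g) lam := hev.deriv.deriv_eq
    rw [heq, hdg]
    have h6 : HasDerivAt (fun u : ℝ => r * (K + 2 * K * u - u ^ 2)) (r * (2 * K - 2 * lam)) lam := by
      have ha : HasDerivAt (fun u : ℝ => 2 * K * u) (2 * K) lam := by
        simpa using (hasDerivAt_id lam).const_mul (2 * K)
      have hb := (ha.const_add K).sub (hasDerivAt_pow 2 lam)
      have := hb.const_mul r
      simpa using this
    have h7 : HasDerivAt (fun u : ℝ => (K + u ^ 2) ^ 2) (2 * (K + lam ^ 2) * (2 * lam)) lam := by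
      simpa using (hK2 lam).fun_pow 2
    have h8 := ((h6.fun_div h7 (by positivity)).sub_const d_h).div_const ω
    rw [h8.deriv]
    have hd := (hden lam).ne'
    field_simp
    ring
  refine ⟨hA, hB, hsnd, ?_⟩
  rw [hsnd]
  apply div_neg_of_neg_of_pos
  · nlinarith [mul_pos hK (sub_pos.mpr hA), mul_pos hlam (sub_pos.mpr hB), mul_pos hK hlam]
  · positivity
end
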